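/- arXiv:1305.4721 — 3 statements merged into one kernel-verified Lean document; each statement's English description precedes it below -/
import Mathlib

section
/- Let B be a symmetric traceless 3×3 matrix, f_B the Bingham distribution, and Q its traceless second moment. Then B·Q = Q·B, i.e., B commutes with Q (equivalently, B commutes with the second moment matrix M = Q + I/3). -/
open MeasureTheory Matrix
noncomputable section
abbrev E3 := EuclideanSpace ℝ (Fin 3)
/-- Surface measure on the unit sphere in ℝ³. -/
def sphMeasure : Measure E3 := (μH[2]).restrict (Metric.sphere 0 1)
/-- The quadratic form mᵀBm. -/
def quadB (B : Matrix (Fin 3) (Fin 3) ℝ) (m : E3) : ℝ := ∑ i, ∑ j, m i * B i j * m j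
/-- Bingham partition function. -/
def Zb (B : Matrix (Fin 3) (Fin 3) ℝ) : ℝ := ∫ m, Real.exp (quadB B m) ∂sphMeasure
/-- Bingham density on the sphere. -/
def fB (B : Matrix (Fin 3) (Fin 3) ℝ) (m : E3) : ℝ := Real.exp (quadB B m) / Zb B

/-!
Diagonalize `B = U D Uᵀ` with `U` orthogonal. Orthogonal maps preserve the surface measure and
`(U m)ᵀ B (U m) = mᵀ D m`, so the second moment matrix of the weight `exp (mᵀ B m)` is `U M_D Uᵀ`,
where `M_D` is the second moment matrix of `exp (mᵀ D m)`. That weight is invariant under every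
coordinate reflection `m_k ↦ -m_k`, which forces the off-diagonal entries of `M_D` to vanish. Diagonal
matrices commute, so `D` commutes with `M_D`, `B` commutes with `M = U M_D Uᵀ`, and hence with
`Q = Z⁻¹ (M - (Z / 3) I)`.
-/

namespace Bingham

def orthogonalIsometry (U : orthogonalGroup (Fin 3) ℝ) : E3 ≃ₗᵢ[ℝ] E3 :=
  Unitary.linearIsometryEquiv ⟨toEuclideanCLM (𝕜 := ℝ) (n := Fin 3) U, Unitary.map_mem _ U.2⟩

lemma orthogonalIsometry_apply (U : orthogonalGroup (Fin 3) ℝ) (m : E3) (i : Fin 3) :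
    orthogonalIsometry U m i = ∑ k, U.1 i k * m k :=
  rfl

lemma quadB_eq_dotProduct (A : Matrix (Fin 3) (Fin 3) ℝ) (m : E3) :
    quadB A m = WithLp.ofLp m ⬝ᵥ (A *ᵥ WithLp.ofLp m) := by
  simp [quadB, dotProduct, mulVec, Finset.mul_sum, mul_assoc]

lemma quadB_orthogonalIsometry (U : orthogonalGroup (Fin 3) ℝ) (A : Matrix (Fin 3) (Fin 3) ℝ)
    (m : E3) :
    quadB A (orthogonalIsometry U m) = quadB (star U.1 * A * U.1) m := by
  have h : WithLp.ofLp (orthogonalIsometry U m) = U.1 *ᵥ WithLp.ofLp m := rfl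
  rw [quadB_eq_dotProduct, quadB_eq_dotProduct, h, star_eq_conjTranspose,
    conjTranspose_eq_transpose_of_trivial, Matrix.mul_assoc, ← mulVec_mulVec,
    dotProduct_mulVec _ U.1ᵀ, vecMul_transpose, mulVec_mulVec]

lemma measurePreserving_sphMeasure (e : E3 ≃ₗᵢ[ℝ] E3) :
    MeasurePreserving e sphMeasure sphMeasure := by
  have hpre : e ⁻¹' Metric.sphere 0 1 = Metric.sphere 0 1 := by
    ext x
    simp
  simpa [sphMeasure, hpre] using
    (e.toIsometryEquiv.measurePreserving_hausdorffMeasure 2).restrict_preimage_emb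
      e.toHomeomorph.measurableEmbedding (Metric.sphere 0 1)

lemma integral_comp_linearIsometryEquiv (e : E3 ≃ₗᵢ[ℝ] E3) (g : E3 → ℝ) :
    ∫ m, g (e m) ∂sphMeasure = ∫ m, g m ∂sphMeasure :=
  (measurePreserving_sphMeasure e).integral_comp e.toHomeomorph.measurableEmbedding g

lemma integrable_comp_linearIsometryEquiv_iff (e : E3 ≃ₗᵢ[ℝ] E3) {g : E3 → ℝ} :
    Integrable (g ∘ e) sphMeasure ↔ Integrable g sphMeasure :=
  (measurePreserving_sphMeasure e).integrable_comp_emb e.toHomeomorph.measurableEmbedding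

lemma ae_norm_eq_one : ∀ᵐ m ∂sphMeasure, ‖m‖ = 1 := by
  filter_upwards [ae_restrict_mem (μ := μH[2]) Metric.isClosed_sphere.measurableSet] with m hm
  simpa using hm

lemma integrable_coord_mul_coord_mul {w : E3 → ℝ} (hw : Integrable w sphMeasure) (k l : Fin 3) :
    Integrable (fun m : E3 => m k * m l * w m) sphMeasure := by
  refine hw.bdd_mul (c := 1) (by fun_prop) ?_
  filter_upwards [ae_norm_eq_one] with m hm
  have hk : ‖m k‖ ≤ 1 := hm ▸ PiLp.norm_apply_le m k
  have hl : ‖m l‖ ≤ 1 := hm ▸ PiLp.norm_apply_le m l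
  rw [norm_mul]
  exact mul_le_one₀ hk (norm_nonneg _) hl

def momentMatrix (w : E3 → ℝ) : Matrix (Fin 3) (Fin 3) ℝ :=
  Matrix.of fun i j => ∫ m, m i * m j * w m ∂sphMeasure

lemma momentMatrix_eq_conj (U : orthogonalGroup (Fin 3) ℝ) {w : E3 → ℝ}
    (hw : Integrable w sphMeasure) :
    momentMatrix w = Unitary.conjStarAlgAut ℝ _ U (momentMatrix (w ∘ orthogonalIsometry U)) := by
  set e := orthogonalIsometry U
  have hwe : Integrable (w ∘ e) sphMeasure := (integrable_comp_linearIsometryEquiv_iff e).2 hw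
  ext i j
  have hint k l := (integrable_coord_mul_coord_mul hwe k l).const_mul (U.1 i k * U.1 j l)
  calc momentMatrix w i j = ∫ m, e m i * e m j * w (e m) ∂sphMeasure :=
        (integral_comp_linearIsometryEquiv e _).symm
    _ = ∫ m, ∑ k, ∑ l, U.1 i k * U.1 j l * (m k * m l * (w ∘ e) m) ∂sphMeasure := by
        congr with m
        rw [orthogonalIsometry_apply, orthogonalIsometry_apply, Finset.sum_mul_sum, Finset.sum_mul]
        refine Finset.sum_congr rfl fun k _ => ?_
        rw [Finset.sum_mul]
        exact Finset.sum_congr rfl fun l _ => by simp only [Function.comp_apply]; ring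
    _ = ∑ k, ∑ l, U.1 i k * U.1 j l * momentMatrix (w ∘ e) k l := by
        rw [integral_finsetSum _ fun k _ => integrable_finsetSum _ fun l _ => hint k l]
        refine Finset.sum_congr rfl fun k _ => ?_
        rw [integral_finsetSum _ fun l _ => hint k l]
        simp only [integral_const_mul, momentMatrix, Matrix.of_apply]
    _ = _ := by
        simp only [Unitary.conjStarAlgAut_apply, Matrix.mul_apply, Finset.sum_mul, star_apply,
          star_trivial]
        rw [Finset.sum_comm]
        exact Finset.sum_congr rfl fun k _ => Finset.sum_congr rfl fun l _ => by ring

def signFlip (k : Fin 3) : orthogonalGroup (Fin 3) ℝ :=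
  ⟨diagonal (Pi.mulSingle k (-1)), by
    rw [mem_unitaryGroup_iff, star_eq_conjTranspose, diagonal_conjTranspose,
      diagonal_mul_diagonal, ← diagonal_one]
    congr with t
    by_cases ht : t = k <;> simp [ht]⟩

lemma quadB_diagonal_signFlip (d : Fin 3 → ℝ) (k : Fin 3) (m : E3) :
    quadB (diagonal d) (orthogonalIsometry (signFlip k) m) = quadB (diagonal d) m := by
  rw [quadB_orthogonalIsometry, signFlip, star_eq_conjTranspose, diagonal_conjTranspose,
    diagonal_mul_diagonal, diagonal_mul_diagonal]
  congr with t
  by_cases ht : t = k <;> simp [ht]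

lemma momentMatrix_isDiag {w : E3 → ℝ} (hw : Integrable w sphMeasure)
    (hflip : ∀ k m, w (orthogonalIsometry (signFlip k) m) = w m) :
    (momentMatrix w).IsDiag := by
  intro i j hij
  have h := congr_fun₂ (momentMatrix_eq_conj (signFlip i) hw) i j
  rw [show w ∘ orthogonalIsometry (signFlip i) = w from funext (hflip i)] at h
  simp only [Unitary.conjStarAlgAut_apply, signFlip, star_eq_conjTranspose, diagonal_conjTranspose,
    diagonal_mul, mul_diagonal, Pi.mulSingle_eq_same, Pi.mulSingle_eq_of_ne' hij, star_trivial] at h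
  linarith

lemma commute_momentMatrix_comp_quadB {B : Matrix (Fin 3) (Fin 3) ℝ} (hB : B.IsHermitian)
    (g : ℝ → ℝ) (hg : Integrable (fun m => g (quadB B m)) sphMeasure) :
    Commute B (momentMatrix fun m => g (quadB B m)) := by
  set U := hB.eigenvectorUnitary
  set D := diagonal (RCLike.ofReal ∘ hB.eigenvalues : Fin 3 → ℝ)
  have hBD : B = Unitary.conjStarAlgAut ℝ _ U D := hB.spectral_theorem
  have hquad m : quadB B (orthogonalIsometry U m) = quadB D m := by
    rw [quadB_orthogonalIsometry, ← Unitary.conjStarAlgAut_star_apply (S := ℝ),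
      hB.conjStarAlgAut_star_eigenvectorUnitary]
  have hgD : Integrable (fun m => g (quadB D m)) sphMeasure := by
    simpa only [Function.comp_def, hquad] using
      (integrable_comp_linearIsometryEquiv_iff (orthogonalIsometry U)).2 hg
  have hM : momentMatrix (fun m => g (quadB B m)) =
      Unitary.conjStarAlgAut ℝ _ U (momentMatrix fun m => g (quadB D m)) := by
    simpa only [Function.comp_def, hquad] using momentMatrix_eq_conj U hg
  have hdiag : (momentMatrix fun m => g (quadB D m)).IsDiag :=
    momentMatrix_isDiag hgD fun k m => by rw [quadB_diagonal_signFlip]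
  have hDM : Commute D (momentMatrix fun m => g (quadB D m)) := by
    rw [← hdiag.diagonal_diag]
    exact commute_diagonal _ _
  rw [hM, hBD]
  exact hDM.map _

lemma binghamQ_eq_smul_momentMatrix {B Q : Matrix (Fin 3) (Fin 3) ℝ}
    (hQ : ∀ i j, Q i j =
      ∫ m, (m i * m j - if i = j then (1:ℝ)/3 else 0) * fB B m ∂sphMeasure)
    (hint : Integrable (fun m => Real.exp (quadB B m)) sphMeasure) :
    Q = (Zb B)⁻¹ • (momentMatrix (fun m => Real.exp (quadB B m)) - (Zb B / 3) • 1) := by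
  ext i j
  have hsplit : (fun m : E3 => (m i * m j - if i = j then (1:ℝ)/3 else 0) * fB B m) =
      fun m => (Zb B)⁻¹ * (m i * m j * Real.exp (quadB B m) -
        (if i = j then (1:ℝ)/3 else 0) * Real.exp (quadB B m)) := by
    ext m
    rw [fB]
    ring
  rw [hQ, hsplit, integral_const_mul,
    integral_sub (integrable_coord_mul_coord_mul hint i j) (hint.const_mul _), integral_const_mul]
  by_cases hij : i = j
  · subst hij
    simp only [if_true, Matrix.smul_apply, Matrix.sub_apply, momentMatrix, of_apply, one_apply_eq,
      smul_eq_mul, Zb]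
    ring
  · simp only [hij, if_false, Matrix.smul_apply, Matrix.sub_apply, momentMatrix, of_apply,
      one_apply_ne hij, smul_eq_mul]
    ring

end Bingham

open Bingham

theorem bingham_B_commutes_Q_general
    (B : Matrix (Fin 3) (Fin 3) ℝ) (hBs : B.IsSymm)
    (Q : Matrix (Fin 3) (Fin 3) ℝ)
    (hQ : ∀ i j, Q i j =
      ∫ m, (m i * m j - if i = j then (1:ℝ)/3 else 0) * fB B m ∂sphMeasure) :
    B * Q = Q * B := by
  by_cases hint : Integrable (fun m => Real.exp (quadB B m)) sphMeasure
  · have hB : B.IsHermitian := by rwa [IsHermitian, conjTranspose_eq_transpose_of_trivial]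
    have hM := commute_momentMatrix_comp_quadB hB Real.exp hint
    rw [binghamQ_eq_smul_momentMatrix hQ hint]
    exact ((hM.sub_right ((Commute.one_right B).smul_right _)).smul_right _).eq
  · -- the Bochner integral `Zb B` of a non-integrable function is `0`, hence so is `fB B`
    have hQ0 : Q = 0 := by
      ext i j
      simp [hQ, fB, Zb, integral_undef hint]
    rw [hQ0, Matrix.mul_zero, Matrix.zero_mul]

theorem bingham_B_commutes_Q
    (B : Matrix (Fin 3) (Fin 3) ℝ) (hBs : B.IsSymm) (hBt : B.trace = 0)
    (Q : Matrix (Fin 3) (Fin 3) ℝ)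
    (hQ : ∀ i j, Q i j =
      ∫ m, (m i * m j - if i = j then (1:ℝ)/3 else 0) * fB B m ∂sphMeasure) :
    B * Q = Q * B :=
  bingham_B_commutes_Q_general B hBs Q hQ
end
end

section
/- For η > 0 let A_k = ∫₀¹ x^k e^{ηx²} dx (k = 0, 2, 4). Then for η ≥ 6, 6A_2 − 5A_4 − A_0 > 0. -/
noncomputable section

open Real

private lemma poly_exp_deriv (a b c4 c3 c2 c1 c0 x : ℝ) :
    HasDerivAt (fun x : ℝ => (c4*x^4+c3*x^3+c2*x^2+c1*x+c0) * Real.exp (a*x+b))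
      ((4*c4*x^3+3*c3*x^2+2*c2*x+c1) * Real.exp (a*x+b)
        + (c4*x^4+c3*x^3+c2*x^2+c1*x+c0) * (Real.exp (a*x+b) * a)) x := by
  have hlin : HasDerivAt (fun x : ℝ => a*x+b) a x := by
    simpa using ((hasDerivAt_id x).const_mul a).add_const b
  have hexp : HasDerivAt (fun x : ℝ => Real.exp (a*x+b)) (Real.exp (a*x+b) * a) x := hlin.exp
  have hp : HasDerivAt (fun x : ℝ => c4*x^4+c3*x^3+c2*x^2+c1*x+c0)
      (4*c4*x^3+3*c3*x^2+2*c2*x+c1) x := by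
    have h4 := (hasDerivAt_pow 4 x).const_mul c4
    have h3 := (hasDerivAt_pow 3 x).const_mul c3
    have h2 := (hasDerivAt_pow 2 x).const_mul c2
    have h1 := (hasDerivAt_id x).const_mul c1
    have h0 := (((h4.add h3).add h2).add h1).add_const c0
    simp only [id_eq] at h0
    refine h0.congr_deriv ?_
    ring
  exact hp.mul hexp

/-- The moments A_k(η) = ∫₀¹ x^k e^{η x²} dx. -/
def A (k : ℕ) (η : ℝ) : ℝ := ∫ x in (0:ℝ)..1, x ^ k * Real.exp (η * x ^ 2)
/-- The order parameter S₂. -/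
def S2 (η : ℝ) : ℝ := (3 * A 2 η - A 0 η) / (2 * A 0 η)
/-- The order parameter S₄. -/
def S4 (η : ℝ) : ℝ := (35 * A 4 η - 30 * A 2 η + 3 * A 0 η) / (8 * A 0 η)

private lemma ftc1 (η : ℝ) : A 0 η + 2 * η * A 2 η = Real.exp η := by
  have hd : ∀ x ∈ Set.uIcc (0:ℝ) 1, HasDerivAt (fun x : ℝ => x * Real.exp (η * x ^ 2))
      (x ^ 0 * Real.exp (η * x ^ 2) + 2 * η * (x ^ 2 * Real.exp (η * x ^ 2))) x := by
    intro x _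
    have h1 : HasDerivAt (fun x : ℝ => Real.exp (η * x ^ 2))
        (Real.exp (η * x ^ 2) * (η * (2 * x ^ 1))) x :=
      ((hasDerivAt_pow 2 x).const_mul η).exp
    have h2 := (hasDerivAt_id x).mul h1
    simp only [id_eq] at h2
    refine h2.congr_deriv ?_
    ring
  have hint : IntervalIntegrable
      (fun x : ℝ => x ^ 0 * Real.exp (η * x ^ 2) + 2 * η * (x ^ 2 * Real.exp (η * x ^ 2)))
      MeasureTheory.volume 0 1 := (by fun_prop : Continuous _).intervalIntegrable _ _
  have key := intervalIntegral.integral_eq_sub_of_hasDerivAt hd hint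
  rw [intervalIntegral.integral_add ((by fun_prop : Continuous _).intervalIntegrable _ _)
      (((by fun_prop : Continuous _).intervalIntegrable _ _).const_mul (2*η)),
    intervalIntegral.integral_const_mul] at key
  simp only [A]
  simp at key ⊢
  linarith [key]

private lemma ftc2 (η : ℝ) : 3 * A 2 η + 2 * η * A 4 η = Real.exp η := by
  have hd : ∀ x ∈ Set.uIcc (0:ℝ) 1, HasDerivAt (fun x : ℝ => x ^ 3 * Real.exp (η * x ^ 2))
      (3 * (x ^ 2 * Real.exp (η * x ^ 2)) + 2 * η * (x ^ 4 * Real.exp (η * x ^ 2))) x := by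
    intro x _
    have h1 : HasDerivAt (fun x : ℝ => Real.exp (η * x ^ 2))
        (Real.exp (η * x ^ 2) * (η * (2 * x ^ 1))) x :=
      ((hasDerivAt_pow 2 x).const_mul η).exp
    have h2 := (hasDerivAt_pow 3 x).mul h1
    refine h2.congr_deriv ?_
    ring
  have hint : IntervalIntegrable
      (fun x : ℝ => 3 * (x ^ 2 * Real.exp (η * x ^ 2)) + 2 * η * (x ^ 4 * Real.exp (η * x ^ 2)))
      MeasureTheory.volume 0 1 := (by fun_prop : Continuous _).intervalIntegrable _ _
  have key := intervalIntegral.integral_eq_sub_of_hasDerivAt hd hint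
  rw [intervalIntegral.integral_add
      (((by fun_prop : Continuous _).intervalIntegrable _ _).const_mul 3)
      (((by fun_prop : Continuous _).intervalIntegrable _ _).const_mul (2*η)),
    intervalIntegral.integral_const_mul, intervalIntegral.integral_const_mul] at key
  simp only [A]
  simp at key ⊢
  linarith [key]

theorem moment_inequality_large_eta (η : ℝ) (hη : 6 ≤ η) :
    6 * A 2 η - 5 * A 4 η - A 0 η > 0 := by
  have hηpos : (0:ℝ) < η := by linarith
  set E := Real.exp η with hE
  set J : ℝ := ∫ x in (0:ℝ)..1, (x^2 + η*x^2*(1-x)^2) * Real.exp (2*η*x + -η) with hJ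
  -- Step 1: J ≤ A 2 η
  have hJle : J ≤ A 2 η := by
    rw [hJ]
    unfold A
    apply intervalIntegral.integral_mono_on (by norm_num)
      ((by fun_prop : Continuous _).intervalIntegrable _ _)
      ((by fun_prop : Continuous _).intervalIntegrable _ _)
    intro x _
    have h1 : η * (1-x)^2 + 1 ≤ Real.exp (η * (1-x)^2) := Real.add_one_le_exp _
    have h2 : (0:ℝ) < Real.exp (2*η*x + -η) := Real.exp_pos _
    have h3 : Real.exp (η * x^2) = Real.exp (η * (1-x)^2) * Real.exp (2*η*x + -η) := by
      rw [← Real.exp_add]; ring_nf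
    calc (x^2 + η*x^2*(1-x)^2) * Real.exp (2*η*x + -η)
        = (x^2 * (η * (1-x)^2 + 1)) * Real.exp (2*η*x + -η) := by ring
      _ ≤ (x^2 * Real.exp (η * (1-x)^2)) * Real.exp (2*η*x + -η) := by
          apply mul_le_mul_of_nonneg_right _ h2.le
          exact mul_le_mul_of_nonneg_left h1 (sq_nonneg x)
      _ = x^2 * Real.exp (η * x^2) := by rw [h3]; ring
  -- Step 2: closed form for 32 η⁵ J
  have hclosed : 32*η^5 * J =
      E * (16*η^4 - 8*η^3 - 16*η^2 + 24*η) - Real.exp (-η) * (8*η^3 + 32*η^2 + 24*η) := by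
    have hd : ∀ x ∈ Set.uIcc (0:ℝ) 1, HasDerivAt
        (fun x : ℝ => ((16*η^5)*x^4 + (-(32*η^5) - 32*η^4)*x^3 + (16*η^5+64*η^4+48*η^3)*x^2
            + (-(16*η^4)-64*η^3-48*η^2)*x + (8*η^3+32*η^2+24*η)) * Real.exp ((2*η)*x + -η))
        (32*η^5 * ((x^2 + η*x^2*(1-x)^2) * Real.exp (2*η*x + -η))) x := by
      intro x _
      have h := poly_exp_deriv (2*η) (-η) (16*η^5) (-(32*η^5) - 32*η^4) (16*η^5+64*η^4+48*η^3)
        (-(16*η^4)-64*η^3-48*η^2) (8*η^3+32*η^2+24*η) x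
      convert h using 1
      ring
    have hint : IntervalIntegrable
        (fun x : ℝ => 32*η^5 * ((x^2 + η*x^2*(1-x)^2) * Real.exp (2*η*x + -η)))
        MeasureTheory.volume 0 1 := (by fun_prop : Continuous _).intervalIntegrable _ _
    have key := intervalIntegral.integral_eq_sub_of_hasDerivAt hd hint
    rw [intervalIntegral.integral_const_mul] at key
    rw [← hJ] at key
    rw [key]
    have e1 : (2*η)*(1:ℝ) + -η = η := by ring
    have e0 : (2*η)*(0:ℝ) + -η = -η := by ring
    rw [e1, e0, ← hE]
    ring
  -- Step 3: the key polynomial-exponential inequality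
  have hEpos : (0:ℝ) < E := Real.exp_pos _
  have hFpos : (0:ℝ) < Real.exp (-η) := Real.exp_pos _
  set F := Real.exp (-η) with hF
  have hEF : E * F = 1 := by rw [hE, hF, ← Real.exp_add]; simp
  have hE2 : 1 + 2*η ≤ E * E := by
    rw [hE, ← Real.exp_add]
    linarith [Real.add_one_le_exp (η + η)]
  have hC4 : (0:ℝ) < 10*η^3 - 27*η^2 + 6*η + 45 := by nlinarith
  have hmain : 0 < E * (10*η^3 - 27*η^2 + 6*η + 45)
      - F * (4*η^4 + 28*η^3 + 75*η^2 + 96*η + 45) := by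
    have hid : E * (10*η^3 - 27*η^2 + 6*η + 45)
        - F * (4*η^4 + 28*η^3 + 75*η^2 + 96*η + 45)
        = F * ((E*E) * (10*η^3 - 27*η^2 + 6*η + 45)
            - (4*η^4 + 28*η^3 + 75*η^2 + 96*η + 45)) := by
      have : F * (E * E) = E := by
        calc F * (E * E) = (E * F) * E := by ring
          _ = E := by rw [hEF]; ring
      nlinarith [this]
    rw [hid]
    apply mul_pos hFpos
    nlinarith [hE2, hC4]
  -- Step 4: (4η²+12η+15) J > (2η+5) E
  have hkey : (4*η^2 + 12*η + 15) * A 2 η > (2*η + 5) * E := by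
    have h32 : (0:ℝ) < 32*η^5 := by positivity
    have step : 32*η^5 * ((4*η^2 + 12*η + 15) * J) > 32*η^5 * ((2*η + 5) * E) := by
      have hring : 32*η^5 * ((4*η^2 + 12*η + 15) * J) - 32*η^5 * ((2*η + 5) * E)
          = (4*η^2 + 12*η + 15) * (32*η^5 * J) - 32*η^5 * ((2*η + 5) * E) := by ring
      rw [gt_iff_lt, ← sub_pos, hring, hclosed]
      have hring2 : (4*η^2 + 12*η + 15) *
            (E * (16*η^4 - 8*η^3 - 16*η^2 + 24*η) - F * (8*η^3 + 32*η^2 + 24*η))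
          - 32*η^5 * ((2*η + 5) * E)
          = 8*η * (E * (10*η^3 - 27*η^2 + 6*η + 45)
              - F * (4*η^4 + 28*η^3 + 75*η^2 + 96*η + 45)) := by ring
      rw [hring2]
      positivity
    have hJ' : (4*η^2 + 12*η + 15) * J > (2*η + 5) * E :=
      lt_of_mul_lt_mul_left step h32.le
    calc (2*η + 5) * E < (4*η^2 + 12*η + 15) * J := hJ'
      _ ≤ (4*η^2 + 12*η + 15) * A 2 η := by
          apply mul_le_mul_of_nonneg_left hJle
          positivity
  -- Step 5: conclude
  have h1 := ftc1 η
  have h2 := ftc2 η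
  rw [← hE] at h1 h2
  have hexpand : 2*η * (6 * A 2 η - 5 * A 4 η - A 0 η)
      = (4*η^2 + 12*η + 15) * A 2 η - (2*η + 5) * E := by
    linear_combination (-(5:ℝ)) * h2 + (-2*η) * h1
  nlinarith [hexpand, hkey, hηpos]
end
end

section
/- For a unit vector field n(x) with |n| = 1 and Q₀ = S_2(n⊗n − I/3), one has (1/2)αG Q₀ : ∇ΔQ₀ = ∇p₁ + ∇·σᴱ with σᴱ = −αGS_2²(∇n ⊙ ∇n) and p₁ a scalar function; concretely, αGS_2² ∂_l(n_i n_j)∂²_k(n_i n_j) = 2αGS_2² ∂_l n_i ∂²_k n_i (summing over repeated indices), using n_i ∂_l n_i = 0. -/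
noncomputable section
/-- Partial derivative ∂_l g at x, for g : ℝ³ → ℝ. -/
def pd (g : (Fin 3 → ℝ) → ℝ) (l : Fin 3) (x : Fin 3 → ℝ) : ℝ :=
  fderiv ℝ g x (Pi.single l 1)
/-- Laplacian Δg at x (sum of second partials). -/
def lap (g : (Fin 3 → ℝ) → ℝ) (x : Fin 3 → ℝ) : ℝ :=
  ∑ k, pd (pd g k) k x

lemma contDiff_pd {f : (Fin 3 → ℝ) → ℝ} (hf : ContDiff ℝ (⊤ : ℕ∞) f) (m : Fin 3) :
    ContDiff ℝ (⊤ : ℕ∞) (pd f m) :=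
  (hf.fderiv_right (by simp)).clm_apply contDiff_const

lemma pd_add {f g : (Fin 3 → ℝ) → ℝ} {x : Fin 3 → ℝ}
    (hf : DifferentiableAt ℝ f x) (hg : DifferentiableAt ℝ g x) (m : Fin 3) :
    pd (fun y => f y + g y) m x = pd f m x + pd g m x := by
  simp [pd, fderiv_fun_add hf hg]

lemma pd_mul {f g : (Fin 3 → ℝ) → ℝ} {x : Fin 3 → ℝ}
    (hf : DifferentiableAt ℝ f x) (hg : DifferentiableAt ℝ g x) (m : Fin 3) :
    pd (fun y => f y * g y) m x = f x * pd g m x + g x * pd f m x := by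
  simp [pd, fderiv_fun_mul hf hg]

lemma lap_mul {f g : (Fin 3 → ℝ) → ℝ} (hf : ContDiff ℝ (⊤ : ℕ∞) f) (hg : ContDiff ℝ (⊤ : ℕ∞) g)
    (x : Fin 3 → ℝ) :
    lap (fun y => f y * g y) x
      = f x * lap g x + g x * lap f x + 2 * ∑ k, pd f k x * pd g k x := by
  have hfd : Differentiable ℝ f := hf.differentiable (by simp)
  have hgd : Differentiable ℝ g := hg.differentiable (by simp)
  have h1 : ∀ k : Fin 3, pd (fun y => f y * g y) k
      = fun y => f y * pd g k y + g y * pd f k y := by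
    intro k; funext y; exact pd_mul (hfd y) (hgd y) k
  have key : ∀ k : Fin 3, pd (pd (fun y => f y * g y) k) k x
      = (f x * pd (pd g k) k x + pd g k x * pd f k x)
        + (g x * pd (pd f k) k x + pd f k x * pd g k x) := by
    intro k
    rw [h1 k,
      pd_add ((hfd x).fun_mul ((contDiff_pd hg k).differentiable (by simp) x))
        ((hgd x).fun_mul ((contDiff_pd hf k).differentiable (by simp) x)) k,
      pd_mul (hfd x) ((contDiff_pd hg k).differentiable (by simp) x) k,
      pd_mul (hgd x) ((contDiff_pd hf k).differentiable (by simp) x) k]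
  unfold lap
  rw [Finset.sum_congr rfl (fun k _ => key k)]
  simp only [Fin.sum_univ_three]
  ring

lemma unit_orth (n : (Fin 3 → ℝ) → (Fin 3 → ℝ))
    (hsm : ∀ i, ContDiff ℝ (⊤ : ℕ∞) fun x => n x i)
    (hunit : ∀ x, ∑ i, (n x i) ^ 2 = 1)
    (m : Fin 3) (x : Fin 3 → ℝ) :
    ∑ i, n x i * pd (fun y => n y i) m x = 0 := by
  have hd : ∀ i, DifferentiableAt ℝ (fun y => n y i) x :=
    fun i => (hsm i).differentiable (by simp) x
  have hF : (fun y => ∑ i, (n y i) ^ 2) = fun _ => (1 : ℝ) := funext hunit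
  have h0 : pd (fun y => ∑ i, (n y i) ^ 2) m x = 0 := by
    rw [hF]; simp [pd]
  have hsq : ∀ i : Fin 3, pd (fun y => (n y i) ^ 2) m x
      = 2 * (n x i * pd (fun y => n y i) m x) := by
    intro i
    have he : (fun y => (n y i) ^ 2) = fun y => n y i * n y i := by
      funext y; ring
    rw [he, pd_mul (hd i) (hd i) m]; ring
  have hsum : pd (fun y => ∑ i, (n y i) ^ 2) m x
      = ∑ i, pd (fun y => (n y i) ^ 2) m x := by
    unfold pd
    rw [fderiv_fun_sum (fun i _ => ((hd i).fun_pow 2))]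
    simp
  rw [hsum] at h0
  simp only [hsq, ← Finset.mul_sum] at h0
  linarith

lemma alg (a L : Fin 3 → ℝ) (p : Fin 3 → Fin 3 → ℝ) (l : Fin 3)
    (h0 : ∑ i, a i ^ 2 = 1) (h1 : ∀ m, ∑ i, a i * p i m = 0) :
    ∑ i, ∑ j, (a i * p j l + a j * p i l) *
        (a i * L j + a j * L i + 2 * ∑ k, p i k * p j k)
      = 2 * ∑ i, p i l * L i := by
  have e1 := h1 l
  have ea := h1 0
  have eb := h1 1
  have ec := h1 2
  simp only [Fin.sum_univ_three] at h0 e1 ea eb ec ⊢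
  linear_combination (2 * (p 0 l * L 0 + p 1 l * L 1 + p 2 l * L 2)) * h0
    + (2 * (a 0 * L 0 + a 1 * L 1 + a 2 * L 2)) * e1
    + (4 * (p 0 l * p 0 0 + p 1 l * p 1 0 + p 2 l * p 2 0)) * ea
    + (4 * (p 0 l * p 0 1 + p 1 l * p 1 1 + p 2 l * p 2 1)) * eb
    + (4 * (p 0 l * p 0 2 + p 1 l * p 1 2 + p 2 l * p 2 2)) * ec

theorem ericksen_stress_pointwise_identity
    (α G S2 : ℝ) (n : (Fin 3 → ℝ) → (Fin 3 → ℝ))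
    (hsm : ∀ i, ContDiff ℝ (⊤ : ℕ∞) fun x => n x i)
    (hunit : ∀ x, ∑ i, (n x i) ^ 2 = 1)
    (l : Fin 3) (x : Fin 3 → ℝ) :
    α * G * S2 ^ 2 *
        (∑ i, ∑ j, pd (fun y => n y i * n y j) l x * lap (fun y => n y i * n y j) x)
      = 2 * α * G * S2 ^ 2 * (∑ i, pd (fun y => n y i) l x * lap (fun y => n y i) x) := by
  have hd : ∀ i, DifferentiableAt ℝ (fun y => n y i) x :=
    fun i => (hsm i).differentiable (by simp) x
  have key : (∑ i, ∑ j, pd (fun y => n y i * n y j) l x * lap (fun y => n y i * n y j) x)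
      = 2 * ∑ i, pd (fun y => n y i) l x * lap (fun y => n y i) x := by
    have hrw : ∀ i j : Fin 3,
        pd (fun y => n y i * n y j) l x * lap (fun y => n y i * n y j) x
        = (n x i * pd (fun y => n y j) l x + n x j * pd (fun y => n y i) l x) *
          (n x i * lap (fun y => n y j) x + n x j * lap (fun y => n y i) x
            + 2 * ∑ k, pd (fun y => n y i) k x * pd (fun y => n y j) k x) := by
      intro i j
      rw [pd_mul (hd i) (hd j) l, lap_mul (hsm i) (hsm j) x]
    calc (∑ i, ∑ j, pd (fun y => n y i * n y j) l x * lap (fun y => n y i * n y j) x)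
        = ∑ i, ∑ j, (n x i * pd (fun y => n y j) l x + n x j * pd (fun y => n y i) l x) *
            (n x i * lap (fun y => n y j) x + n x j * lap (fun y => n y i) x
              + 2 * ∑ k, pd (fun y => n y i) k x * pd (fun y => n y j) k x) := by
          exact Finset.sum_congr rfl fun i _ => Finset.sum_congr rfl fun j _ => hrw i j
      _ = 2 * ∑ i, pd (fun y => n y i) l x * lap (fun y => n y i) x :=
          alg (fun i => n x i) (fun i => lap (fun y => n y i) x)
            (fun i m => pd (fun y => n y i) m x) l (hunit x)
            (fun m => unit_orth n hsm hunit m x)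
  rw [key]; ring
end
end
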